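/- Let n ≥ 2, let η ∈ M_{2n+1}(ℝ) be the diagonal matrix diag(−1, 1, …, 1), and let so(1,2n) := {A ∈ M_{2n+1}(ℝ) : Aᵀη + ηA = 0}. Let j₀ = [[0, −I_n],[I_n, 0]] ∈ M_{2n}(ℝ), and set 𝔭 := {[[0, uᵀ],[u, 0]] : u ∈ ℝ^{2n}} and 𝔮 := {[[0,0],[0,B]] : B ∈ M_{2n}(ℝ) skew-symmetric with Bj₀ = −j₀B}. Define the linear map J₀⁻ : so(1,2n) → so(1,2n) by J₀⁻([[0, uᵀ],[u, B]]) := [[0, −(j₀u)ᵀ],[−j₀u, (1/2)(j₀B − Bj₀)]], and N^{J₀⁻}(A,A') := [J₀⁻A, J₀⁻A'] − J₀⁻[J₀⁻A, A'] − J₀⁻[A, J₀⁻A'] − [A, A'] (matrix commutators). Then the linear span of {N^{J₀⁻}(A, A') : A, A' ∈ 𝔭 + 𝔮} equals 𝔭 ⊕ 𝔮. -/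

import Mathlib

/-!
Write the elements of `𝔭 ⊕ 𝔮` as `[[0, uᵀ], [u, B]]`. A block computation gives
`N^{J₀⁻}([[0, uᵀ], [u, B]], [[0, vᵀ], [v, C]]) = [[0, wᵀ], [w, -2 q(u vᵀ)]]` with
`w = 4 (C u - B v)` and `q(T) = (T - Tᵀ) + j₀ (T - Tᵀ) j₀`, which is four times the projection
of `T` onto `𝔮`; so every value lies in `𝔭 ⊕ 𝔮`. Conversely, pairs from `𝔭 × 𝔭` give all
`q(eᵢ eⱼᵀ)`, which span `q(M_{2n}) = 𝔮`, and pairs from `𝔭 × 𝔮` give the vectors `C u`. For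
`n ≥ 2` these include every basis vector: `C = diag(X, -X)` with `X = E_kl - E_lk` lies in `𝔮`,
and so does `j₀ C`.
-/

open Matrix

noncomputable section

/-- Block index type: `Unit ⊕ (Fin n ⊕ Fin n)`, the first summand corresponding to the
`x⁰`-direction and the second to `ℝ^{2n}`. -/
abbrev twIdx (n : ℕ) := Unit ⊕ (Fin n ⊕ Fin n)

/-- The standard complex structure `j₀ = [[0, -Iₙ],[Iₙ, 0]]` on `ℝ^{2n}`. -/
def j0 (n : ℕ) : Matrix (Fin n ⊕ Fin n) (Fin n ⊕ Fin n) ℝ :=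
  Matrix.fromBlocks 0 (-1) 1 0

/-- The Lorentz form `η = diag(-1, 1, …, 1)` on `ℝ^{1,2n}`. -/
def lorentzEta (n : ℕ) : Matrix (twIdx n) (twIdx n) ℝ :=
  Matrix.fromBlocks (-1) 0 0 1

/-- The Lie algebra `so(1,2n) = {A : Aᵀ η + η A = 0}`, as a set of matrices. -/
def soSet (n : ℕ) : Set (Matrix (twIdx n) (twIdx n) ℝ) :=
  {A | Aᵀ * lorentzEta n + lorentzEta n * A = 0}

/-- The subspace `𝔭 = {[[0, uᵀ],[u, 0]] : u ∈ ℝ^{2n}}`. -/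
def pSet (n : ℕ) : Set (Matrix (twIdx n) (twIdx n) ℝ) :=
  {M | ∃ u : Matrix (Fin n ⊕ Fin n) Unit ℝ, M = Matrix.fromBlocks 0 uᵀ u 0}

/-- The subspace `𝔮 = {[[0,0],[0,B]] : B skew-symmetric, B j₀ = -j₀ B}`. -/
def qSet (n : ℕ) : Set (Matrix (twIdx n) (twIdx n) ℝ) :=
  {M | ∃ B : Matrix (Fin n ⊕ Fin n) (Fin n ⊕ Fin n) ℝ,
    Bᵀ = -B ∧ B * j0 n = -(j0 n * B) ∧ M = Matrix.fromBlocks 0 0 0 B}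

/-- The map `J₀⁻` sending `[[0, uᵀ],[u, B]]` to `[[0, -(j₀u)ᵀ],[-j₀u, (1/2)(j₀B - Bj₀)]]`. -/
def Jminus (n : ℕ) (A : Matrix (twIdx n) (twIdx n) ℝ) : Matrix (twIdx n) (twIdx n) ℝ :=
  Matrix.fromBlocks 0 (-(j0 n * A.toBlocks₂₁)ᵀ) (-(j0 n * A.toBlocks₂₁))
    ((1/2 : ℝ) • (j0 n * A.toBlocks₂₂ - A.toBlocks₂₂ * j0 n))

/-- The algebraic Nijenhuis tensor of `J₀⁻`, the brackets being matrix commutators. -/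
def nijJminus (n : ℕ) (A A' : Matrix (twIdx n) (twIdx n) ℝ) :
    Matrix (twIdx n) (twIdx n) ℝ :=
  (Jminus n A * Jminus n A' - Jminus n A' * Jminus n A)
    - Jminus n (Jminus n A * A' - A' * Jminus n A)
    - Jminus n (A * Jminus n A' - Jminus n A' * A)
    - (A * A' - A' * A)

namespace TwistorNijenhuis

section BasisMembership

variable {ι R M N : Type*} [Semiring R] [AddCommMonoid M] [Module R M] [AddCommMonoid N]
  [Module R N]

lemma map_mem_of_basis_mem (b : Module.Basis ι R M) (f : M →ₗ[R] N) {p : Submodule R N}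
    (h : ∀ i, f (b i) ∈ p) (x : M) : f x ∈ p := by
  have hle : Submodule.span R (Set.range b) ≤ p.comap f :=
    Submodule.span_le.mpr (Set.range_subset_iff.mpr h)
  exact hle (b.span_eq ▸ Submodule.mem_top)

end BasisMembership

variable {n : ℕ}

abbrev Vec2n (n : ℕ) := Matrix (Fin n ⊕ Fin n) Unit ℝ
abbrev Mat2n (n : ℕ) := Matrix (Fin n ⊕ Fin n) (Fin n ⊕ Fin n) ℝ

lemma j0_mul_j0 : j0 n * j0 n = -1 := by
  simp only [j0, fromBlocks_multiply]
  rw [← fromBlocks_one, fromBlocks_neg]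
  simp

lemma j0_mul_j0_mul {κ : Type*} (X : Matrix (Fin n ⊕ Fin n) κ ℝ) : j0 n * (j0 n * X) = -X := by
  rw [← Matrix.mul_assoc, j0_mul_j0, Matrix.neg_mul, Matrix.one_mul]

lemma j0_transpose : (j0 n)ᵀ = -j0 n := by
  simp only [j0, fromBlocks_transpose, fromBlocks_neg]
  simp

lemma j0_mul_single_inl (k : Fin n) :
    j0 n * Matrix.single (Sum.inl k : Fin n ⊕ Fin n) () (1 : ℝ) =
      Matrix.single (Sum.inr k) () 1 := by
  ext (a | a) b <;>
    simp [j0, Matrix.mul_apply, Matrix.single, Matrix.fromBlocks, Matrix.one_apply, eq_comm]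

def qBlock (n : ℕ) : Submodule ℝ (Mat2n n) where
  carrier := {B | Bᵀ = -B ∧ B * j0 n = -(j0 n * B)}
  add_mem' := by
    rintro B B' ⟨hB, hBj⟩ ⟨hB', hB'j⟩
    refine ⟨by rw [transpose_add, hB, hB', neg_add], ?_⟩
    rw [Matrix.add_mul, hBj, hB'j, Matrix.mul_add, neg_add]
  zero_mem' := by simp
  smul_mem' := by
    rintro c B ⟨hB, hBj⟩
    exact ⟨by rw [transpose_smul, hB, smul_neg],
      by rw [Matrix.smul_mul, hBj, Matrix.mul_smul, smul_neg]⟩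

lemma j0_mul_mem_qBlock {B : Mat2n n} (hB : B ∈ qBlock n) : j0 n * B ∈ qBlock n := by
  obtain ⟨hBt, hBj⟩ := hB
  refine ⟨?_, ?_⟩
  · rw [Matrix.transpose_mul, hBt, j0_transpose, Matrix.neg_mul, Matrix.mul_neg, neg_neg, hBj]
  · rw [Matrix.mul_assoc, hBj, Matrix.mul_neg, j0_mul_j0_mul]

def qPart (n : ℕ) : Mat2n n →ₗ[ℝ] Mat2n n where
  toFun T := (T - Tᵀ) + j0 n * (T - Tᵀ) * j0 n
  map_add' T T' := by
    simp only [transpose_add, Matrix.mul_add, Matrix.add_mul, Matrix.mul_sub, Matrix.sub_mul]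
    abel
  map_smul' c T := by
    simp only [transpose_smul, Matrix.mul_smul, Matrix.smul_mul, Matrix.mul_sub, Matrix.sub_mul,
      RingHom.id_apply, smul_add, smul_sub]

lemma qPart_apply (T : Mat2n n) : qPart n T = (T - Tᵀ) + j0 n * (T - Tᵀ) * j0 n := rfl

lemma qPart_mem_qBlock (T : Mat2n n) : qPart n T ∈ qBlock n := by
  refine ⟨?_, ?_⟩
  · rw [qPart_apply, transpose_add, Matrix.transpose_mul, Matrix.transpose_mul, j0_transpose,
      transpose_sub, transpose_transpose]
    simp only [Matrix.neg_mul, Matrix.mul_neg, Matrix.mul_assoc, Matrix.mul_sub,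
      Matrix.sub_mul]
    abel
  · simp only [qPart_apply, Matrix.add_mul, Matrix.mul_add, Matrix.mul_assoc, j0_mul_j0,
      j0_mul_j0_mul, Matrix.mul_neg, Matrix.mul_one]
    abel

lemma qPart_of_mem_qBlock {B : Mat2n n} (hB : B ∈ qBlock n) : qPart n B = (4 : ℝ) • B := by
  obtain ⟨hBt, hBj⟩ := hB
  have hjBj : j0 n * B * j0 n = B := by
    rw [Matrix.mul_assoc, hBj, Matrix.mul_neg, j0_mul_j0_mul, neg_neg]
  rw [qPart_apply, hBt, sub_neg_eq_add, Matrix.mul_add, Matrix.add_mul, hjBj]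
  module

def pqMat (n : ℕ) : Vec2n n × Mat2n n →ₗ[ℝ] Matrix (twIdx n) (twIdx n) ℝ where
  toFun x := fromBlocks 0 x.1ᵀ x.1 x.2
  map_add' x y := by simp [fromBlocks_add, transpose_add]
  map_smul' c x := by simp [fromBlocks_smul, transpose_smul]

lemma pqMat_apply (u : Vec2n n) (B : Mat2n n) : pqMat n (u, B) = fromBlocks 0 uᵀ u B := rfl

def pqSub (n : ℕ) : Submodule ℝ (Matrix (twIdx n) (twIdx n) ℝ) :=
  ((⊤ : Submodule ℝ (Vec2n n)).prod (qBlock n)).map (pqMat n)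

lemma pqMat_mem_pqSub (u : Vec2n n) {B : Mat2n n} (hB : B ∈ qBlock n) :
    pqMat n (u, B) ∈ pqSub n :=
  Submodule.mem_map_of_mem ⟨Submodule.mem_top, hB⟩

lemma span_pSet_union_qSet : Submodule.span ℝ (pSet n ∪ qSet n) = pqSub n := by
  apply le_antisymm
  · rw [Submodule.span_le]
    rintro _ (⟨u, rfl⟩ | ⟨B, hBt, hBj, rfl⟩)
    · exact pqMat_mem_pqSub u (zero_mem _)
    · exact pqMat_mem_pqSub 0 ⟨hBt, hBj⟩
  · rintro _ ⟨⟨u, B⟩, ⟨-, hBt, hBj⟩, rfl⟩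
    rw [← Prod.fst_add_snd (u, B), map_add]
    exact add_mem (Submodule.subset_span (Or.inl ⟨u, rfl⟩))
      (Submodule.subset_span (Or.inr ⟨B, hBt, hBj, by simp [pqMat_apply]⟩))

lemma nijJminus_pqMat (u v : Vec2n n) {B C : Mat2n n} (hB : B ∈ qBlock n) (hC : C ∈ qBlock n) :
    nijJminus n (pqMat n (u, B)) (pqMat n (v, C))
      = pqMat n ((4 : ℝ) • (C * u - B * v), (-2 : ℝ) • qPart n (u * vᵀ)) := by
  obtain ⟨hBt, hBj⟩ := hB
  obtain ⟨hCt, hCj⟩ := hC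
  have hBj' {κ : Type} (X : Matrix (Fin n ⊕ Fin n) κ ℝ) :
      B * (j0 n * X) = -(j0 n * (B * X)) := by
    rw [← Matrix.mul_assoc, hBj, Matrix.neg_mul, Matrix.mul_assoc]
  have hCj' {κ : Type} (X : Matrix (Fin n ⊕ Fin n) κ ℝ) :
      C * (j0 n * X) = -(j0 n * (C * X)) := by
    rw [← Matrix.mul_assoc, hCj, Matrix.neg_mul, Matrix.mul_assoc]
  simp only [nijJminus, Jminus, pqMat_apply, qPart_apply, sub_eq_add_neg, fromBlocks_multiply,
    toBlocks_fromBlocks₂₁, toBlocks_fromBlocks₂₂, fromBlocks_neg, fromBlocks_add,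
    fromBlocks_inj]
  refine ⟨?_, ?_, ?_, ?_⟩ <;>
  · simp only [Matrix.transpose_mul, Matrix.transpose_neg, Matrix.transpose_smul,
      Matrix.transpose_add, Matrix.transpose_transpose, j0_transpose, hBt, hCt,
      Matrix.mul_assoc, Matrix.mul_add, Matrix.add_mul, Matrix.neg_mul, Matrix.mul_neg,
      Matrix.smul_mul, Matrix.mul_smul, Matrix.mul_zero, Matrix.zero_mul, Matrix.mul_one,
      hBj, hCj, hBj', hCj', j0_mul_j0_mul, j0_mul_j0,
      smul_neg, smul_add, neg_neg, add_zero, zero_add, neg_zero]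
    module

lemma nijJminus_mem_pqSub {A A' : Matrix (twIdx n) (twIdx n) ℝ} (hA : A ∈ pqSub n)
    (hA' : A' ∈ pqSub n) : nijJminus n A A' ∈ pqSub n := by
  obtain ⟨⟨u, B⟩, ⟨-, hB⟩, rfl⟩ := hA
  obtain ⟨⟨v, C⟩, ⟨-, hC⟩, rfl⟩ := hA'
  rw [nijJminus_pqMat u v hB hC]
  exact pqMat_mem_pqSub _ (Submodule.smul_mem _ _ (qPart_mem_qBlock _))

def nijImage (n : ℕ) : Set (Matrix (twIdx n) (twIdx n) ℝ) :=
  {w | ∃ A A', A ∈ pqSub n ∧ A' ∈ pqSub n ∧ w = nijJminus n A A'}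

lemma nijJminus_mem_span_nijImage {A A' : Matrix (twIdx n) (twIdx n) ℝ} (hA : A ∈ pqSub n)
    (hA' : A' ∈ pqSub n) : nijJminus n A A' ∈ Submodule.span ℝ (nijImage n) :=
  Submodule.subset_span ⟨A, A', hA, hA', rfl⟩

lemma pqMat_mul_mem_span_nijImage {C : Mat2n n} (hC : C ∈ qBlock n) (u : Vec2n n) :
    pqMat n (C * u, 0) ∈ Submodule.span ℝ (nijImage n) := by
  have h := nijJminus_mem_span_nijImage (pqMat_mem_pqSub u (zero_mem _)) (pqMat_mem_pqSub 0 hC)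
  rw [nijJminus_pqMat u 0 (zero_mem _) hC] at h
  simpa [← map_smul] using Submodule.smul_mem _ (4 : ℝ)⁻¹ h

lemma exists_mem_qBlock_mul_eq_single_inl (hn : 2 ≤ n) (k : Fin n) :
    ∃ C ∈ qBlock n, ∃ v : Vec2n n, C * v = Matrix.single (Sum.inl k) () 1 := by
  have : Nontrivial (Fin n) := Fin.nontrivial_iff_two_le.mpr hn
  obtain ⟨l, hlk⟩ := exists_ne k
  set X : Matrix (Fin n) (Fin n) ℝ := Matrix.single k l 1 - Matrix.single l k 1
  refine ⟨fromBlocks X 0 0 (-X), ⟨?_, ?_⟩, Matrix.single (Sum.inl l) () 1, ?_⟩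
  · simp [X, fromBlocks_transpose, fromBlocks_neg, Matrix.transpose_single]
  · simp [j0, fromBlocks_multiply, fromBlocks_neg]
  · ext (a | a) b <;> simp [X, Matrix.mul_apply, Matrix.single, Matrix.fromBlocks, hlk.symm]

lemma exists_mem_qBlock_mul_eq_single (hn : 2 ≤ n) :
    ∀ i : Fin n ⊕ Fin n, ∃ C ∈ qBlock n, ∃ v : Vec2n n, C * v = Matrix.single i () 1
  | .inl k => exists_mem_qBlock_mul_eq_single_inl hn k
  | .inr k => by
    obtain ⟨C, hC, v, hCv⟩ := exists_mem_qBlock_mul_eq_single_inl hn k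
    exact ⟨j0 n * C, j0_mul_mem_qBlock hC, v, by rw [Matrix.mul_assoc, hCv, j0_mul_single_inl]⟩

lemma pqMat_inl_mem_span_nijImage (hn : 2 ≤ n) (u : Vec2n n) :
    pqMat n (u, 0) ∈ Submodule.span ℝ (nijImage n) := by
  refine map_mem_of_basis_mem (Matrix.stdBasis ℝ (Fin n ⊕ Fin n) Unit)
    (pqMat n ∘ₗ LinearMap.inl ℝ _ _) (fun ⟨i, ()⟩ => ?_) u
  obtain ⟨C, hC, v, hCv⟩ := exists_mem_qBlock_mul_eq_single hn i
  simpa [Matrix.stdBasis_eq_single, ← hCv] using pqMat_mul_mem_span_nijImage hC v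

lemma pqMat_inr_mem_span_nijImage {B : Mat2n n} (hB : B ∈ qBlock n) :
    pqMat n (0, B) ∈ Submodule.span ℝ (nijImage n) := by
  have hqPart (T : Mat2n n) : pqMat n (0, qPart n T) ∈ Submodule.span ℝ (nijImage n) := by
    refine map_mem_of_basis_mem (Matrix.stdBasis ℝ (Fin n ⊕ Fin n) (Fin n ⊕ Fin n))
      (pqMat n ∘ₗ LinearMap.inr ℝ _ _ ∘ₗ qPart n) (fun ⟨i, j⟩ => ?_) T
    have h := nijJminus_mem_span_nijImage (pqMat_mem_pqSub (Matrix.single i () (1 : ℝ))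
      (zero_mem _)) (pqMat_mem_pqSub (Matrix.single j () (1 : ℝ)) (zero_mem _))
    rw [nijJminus_pqMat _ _ (zero_mem _) (zero_mem _)] at h
    simpa [Matrix.stdBasis_eq_single, Matrix.transpose_single, ← map_smul]
      using Submodule.smul_mem _ (-2 : ℝ)⁻¹ h
  have h := hqPart B
  rw [qPart_of_mem_qBlock hB] at h
  simpa [← map_smul] using Submodule.smul_mem _ (4 : ℝ)⁻¹ h

lemma pqSub_le_span_nijImage (hn : 2 ≤ n) : pqSub n ≤ Submodule.span ℝ (nijImage n) := by
  rintro _ ⟨⟨u, B⟩, ⟨-, hB⟩, rfl⟩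
  rw [← Prod.fst_add_snd (u, B), map_add]
  exact add_mem (pqMat_inl_mem_span_nijImage hn u) (pqMat_inr_mem_span_nijImage hB)

end TwistorNijenhuis

/-- For `n ≥ 2`, the linear span of the values `N^{J₀⁻}(A, A')` for
`A, A'` ranging over `𝔭 + 𝔮` equals `𝔭 ⊕ 𝔮`.  (This underlies the maximal
non-integrability of `J⁻` on the twistor space over hyperbolic space.) -/
theorem stmt_18 (n : ℕ) (hn : 2 ≤ n) :
    Submodule.span ℝ {w : Matrix (twIdx n) (twIdx n) ℝ |
        ∃ A A' : Matrix (twIdx n) (twIdx n) ℝ,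
          A ∈ Submodule.span ℝ (pSet n ∪ qSet n) ∧
          A' ∈ Submodule.span ℝ (pSet n ∪ qSet n) ∧
          w = nijJminus n A A'} =
      Submodule.span ℝ (pSet n ∪ qSet n) := by
  rw [TwistorNijenhuis.span_pSet_union_qSet]
  refine le_antisymm (Submodule.span_le.mpr ?_) (TwistorNijenhuis.pqSub_le_span_nijImage hn)
  rintro _ ⟨A, A', hA, hA', rfl⟩
  exact TwistorNijenhuis.nijJminus_mem_pqSub hA hA'

end
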